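/- arXiv:1710.08820 — 2 statements merged into one kernel-verified Lean document; each statement's English description precedes it below -/
import Mathlib

section
/- Let T : {0,1}* → {0,1}* be an aperiodic morphism. Then T, extended to infinite binary words, is either order-preserving on infinite words or order-reversing on infinite words. -/
/-- Apply a binary morphism to a finite word. -/
def applyM (T : Bool → List Bool) (w : List Bool) : List Bool := (w.map T).flatten

/-- Strict lexicographic order on finite binary words (false < true). -/
def LexLt (u v : List Bool) : Prop := List.Lex (· < ·) u v

/-- Lexicographic order: u ≤ v iff u is a prefix of v or they differ with a smaller letter. -/
def LexLe (u v : List Bool) : Prop := List.Lex (· < ·) u v ∨ u = v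

/-- Image of an infinite word under a morphism (letterwise, concatenated). -/
def applyInf (T : Bool → List Bool) (u : ℕ → Bool) : ℕ → Bool :=
  fun n => (applyM T ((List.range (n + 1)).map u)).getD n false

/-- Strict lexicographic order on infinite binary words (false < true). -/
def InfLt (u v : ℕ → Bool) : Prop := ∃ n, (∀ i < n, u i = v i) ∧ u n < v n

/-- n-fold concatenation power of a word. -/
def wpow {α : Type*} (x : List α) (n : ℕ) : List α := (List.replicate n x).flatten

/-- A word is primitive if it is not a power uⁿ with n ≥ 2. -/
def PrimitiveW {α : Type*} (x : List α) : Prop := ∀ (u : List α) (n : ℕ), 2 ≤ n → x ≠ wpow u n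

/-- A binary morphism is periodic if T(0), T(1) are powers of a common word. -/
def PeriodicM (T : Bool → List Bool) : Prop :=
  ∃ (t : List Bool) (i j : ℕ), T false = wpow t i ∧ T true = wpow t j

/-- The i-th shift of an infinite word. -/
def shiftW {α : Type*} (ω : ℕ → α) (i : ℕ) : ℕ → α := fun n => ω (i + n)

/-- The word w occurs in ω at position i. -/
def OccursAt {α : Type*} (ω : ℕ → α) (w : List α) (i : ℕ) : Prop :=
  ∀ k < w.length, w[k]? = some (ω (i + k))

/-- w is a factor of ω. -/
def IsFactor {α : Type*} (ω : ℕ → α) (w : List α) : Prop := ∃ i, OccursAt ω w i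

/-- Occurrences at i and i' of length-n factors induce the same permutation:
the relative lexicographic order of the shifts starting inside the occurrences agree. -/
def SamePermAt (ω : ℕ → Bool) (n i i' : ℕ) : Prop :=
  ∀ k < n, ∀ l < n,
    (InfLt (shiftW ω (i + k)) (shiftW ω (i + l)) ↔ InfLt (shiftW ω (i' + k)) (shiftW ω (i' + l)))

/-- Two factors of ω have the same permutation: some occurrences induce equal patterns. -/
def SamePerm (ω : ℕ → Bool) (u v : List Bool) : Prop :=
  ∃ i i', OccursAt ω u i ∧ OccursAt ω v i' ∧ u.length = v.length ∧
    SamePermAt ω u.length i i'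

/-- w is a right special factor of ω. -/
def RightSpecial (ω : ℕ → Bool) (w : List Bool) : Prop :=
  IsFactor ω (w ++ [false]) ∧ IsFactor ω (w ++ [true])

/-- w is a left special factor of ω. -/
def LeftSpecial (ω : ℕ → Bool) (w : List Bool) : Prop :=
  IsFactor ω (false :: w) ∧ IsFactor ω (true :: w)

/-- An infinite word is aperiodic: no two distinct shifts are equal. -/
def AperiodicW {α : Type*} (ω : ℕ → α) : Prop := ∀ i j : ℕ, i ≠ j → shiftW ω i ≠ shiftW ω j

/-- A finite word has period q. -/
def HasPeriod {α : Type*} (w : List α) (q : ℕ) : Prop :=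
  ∀ i, i + q < w.length → w[i]? = w[i + q]?

/-- Uniform recurrence: every long enough factor contains every short factor. -/
def UniformlyRecurrent {α : Type*} (s : ℕ → α) : Prop :=
  ∀ ℓ : ℕ, ∃ L : ℕ, ∀ w z : List α, IsFactor s w → w.length = L →
    IsFactor s z → z.length = ℓ → z <:+: w

/-- Not eventually periodic. -/
def NotEventuallyPeriodic {α : Type*} (s : ℕ → α) : Prop :=
  ¬ ∃ p : ℕ, 1 ≤ p ∧ ∃ N : ℕ, ∀ n ≥ N, s (n + p) = s n

/-- Concatenation of a finite word with an infinite word. -/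
def catInf (w : List Bool) (u : ℕ → Bool) : ℕ → Bool :=
  fun n => if h : n < w.length then w.get ⟨n, h⟩ else u (n - w.length)

/-!
Write `A = T 0` and `B = T 1`. Aperiodicity means `AB ≠ BA` (commuting words are powers of a
common word), so `AB` and `BA` begin with `q a` and `q b` for a word `q` and letters `a ≠ b`.
The key fact is that `q a` is a prefix of `A T(w)` for every long enough word `w`, and
symmetrically `q b` of `B T(w)`. This is clear if `|q| < |A|`; otherwise one of `A`, `B` is a prefix
of the other, say `B = A D` (resp. `A = B E`), and `T` factors through the substitution
`0 ↦ 0, 1 ↦ 01` (resp. `0 ↦ 10, 1 ↦ 1`) followed by the morphism `(A, D)` (resp. `(E, B)`), for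
which the same claim holds with a shorter `q`: this is the Euclidean algorithm on `(|A|, |B|)`.
So if `u < v` first differ at position `n`, both `T(u)` and `T(v)` begin with `T(u₀ ⋯ uₙ₋₁) q`,
followed by `a` and `b` respectively: `T` preserves the order if `a < b` and reverses it otherwise.
-/

lemma wpow_add {α : Type*} (t : List α) (i j : ℕ) : wpow t (i + j) = wpow t i ++ wpow t j := by
  rw [wpow, List.replicate_add, List.flatten_append]; rfl

theorem exists_eq_wpow_of_append_comm {α : Type*} {A B : List α} (h : A ++ B = B ++ A) :
    ∃ (t : List α) (i j : ℕ), A = wpow t i ∧ B = wpow t j := by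
  induction hn : A.length + B.length using Nat.strong_induction_on generalizing A B with
  | _ n ih =>
  wlog hAB : A.length ≤ B.length generalizing A B
  · obtain ⟨t, i, j, hA, hB⟩ := this h.symm (by omega) (by omega)
    exact ⟨t, j, i, hB, hA⟩
  rcases eq_or_ne A [] with rfl | hA
  · exact ⟨B, 0, 1, by simp [wpow], by simp [wpow]⟩
  obtain ⟨C, rfl⟩ : A <+: B :=
    List.prefix_of_prefix_length_le (h ▸ List.prefix_append A B) (List.prefix_append B A) hAB
  have hAC : A ++ C = C ++ A := by simpa using h
  obtain ⟨t, i, j, rfl, rfl⟩ := ih _ (by simp [← hn, List.length_pos_iff.mpr hA]) hAC rfl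
  exact ⟨t, i, i + j, rfl, (wpow_add t i j).symm⟩

lemma exists_prefix_append_singleton_of_ne {α : Type*} :
    ∀ {l₁ l₂ : List α}, l₁.length = l₂.length → l₁ ≠ l₂ →
      ∃ q a b, a ≠ b ∧ q ++ [a] <+: l₁ ∧ q ++ [b] <+: l₂
  | [], [], _, h => absurd rfl h
  | a :: l₁, b :: l₂, hlen, hne => by
    by_cases hab : a = b
    · subst hab
      obtain ⟨q, c, d, hcd, hc, hd⟩ :=
        exists_prefix_append_singleton_of_ne (by simpa using hlen) (by simpa using hne)
      exact ⟨a :: q, c, d, hcd, by simpa using hc, by simpa using hd⟩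
    · exact ⟨[], a, b, hab, by simp, by simp⟩

@[simp] lemma applyM_nil (T : Bool → List Bool) : applyM T [] = [] := rfl

@[simp] lemma applyM_cons (T : Bool → List Bool) (c : Bool) (w : List Bool) :
    applyM T (c :: w) = T c ++ applyM T w := by
  simp [applyM]

@[simp] lemma applyM_append (T : Bool → List Bool) (u v : List Bool) :
    applyM T (u ++ v) = applyM T u ++ applyM T v := by
  simp [applyM]

lemma applyM_applyM (T σ : Bool → List Bool) (w : List Bool) :
    applyM T (applyM σ w) = applyM (fun c => applyM T (σ c)) w := by
  induction w with
  | nil => rfl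
  | cons c w ih => simp [ih]

lemma length_le_length_applyM {T : Bool → List Bool} (hT : ∀ c, T c ≠ []) (w : List Bool) :
    w.length ≤ (applyM T w).length := by
  induction w with
  | nil => simp
  | cons c w ih =>
    have := List.length_pos_iff.mpr (hT c)
    simp only [applyM_cons, List.length_cons, List.length_append]
    omega

lemma exists_applyM_cons_false_eq_of_append_eq_left {T : Bool → List Bool} {D : List Bool}
    (hD : T false ++ D = T true) {w : List Bool} (hw : w ≠ []) :
    ∃ v, applyM T (false :: w) =
      T false ++ applyM (fun c => if c then D else T false) (false :: v) := by
  obtain ⟨d, w, rfl⟩ := List.exists_cons_of_ne_nil hw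
  have hfactor : applyM T w = applyM (fun c => if c then D else T false)
      (applyM (fun c => if c then [false, true] else [false]) w) := by
    rw [applyM_applyM]
    congr 1
    funext c
    cases c <;> simp [← hD]
  refine ⟨(if d then [true] else []) ++
    applyM (fun c => if c then [false, true] else [false]) w, ?_⟩
  cases d <;> simp [hfactor, ← hD]

lemma exists_applyM_cons_false_eq_of_append_eq_right {T : Bool → List Bool} {E : List Bool}
    (hE : T true ++ E = T false) (w : List Bool) :
    ∃ v, applyM T (false :: w) =
      T true ++ applyM (fun c => if c then T true else E) (false :: v) := by
  refine ⟨applyM (fun c => if c then [true] else [true, false]) w, ?_⟩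
  rw [applyM_cons, applyM_cons, applyM_applyM, ← hE, List.append_assoc]
  congr 3
  funext c
  cases c <;> simp [← hE]

theorem prefix_applyM_cons_false {q : List Bool} {e : Bool} {T : Bool → List Bool}
    (hA : T false ≠ []) (he : q ++ [e] <+: T false ++ T true) (hq : q <+: T true ++ T false)
    (w : List Bool) (hlen : q.length < (applyM T (false :: w)).length) :
    q ++ [e] <+: applyM T (false :: w) := by
  induction hn : q.length using Nat.strong_induction_on generalizing q T w with
  | _ n ih =>
  subst hn
  by_cases hqA : q.length < (T false).length
  · exact (List.prefix_of_prefix_length_le he (List.prefix_append _ _) (by simp; omega)).trans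
      (List.prefix_append _ _)
  obtain ⟨q, rfl⟩ : T false <+: q := List.prefix_of_prefix_length_le (List.prefix_append _ _)
    ((List.prefix_append _ _).trans he) (by omega)
  rcases le_or_gt (T false).length (T true).length with hAB | hBA
  · obtain ⟨D, hD⟩ : T false <+: T true := List.prefix_of_prefix_length_le
      ((List.prefix_append _ q).trans hq) (List.prefix_append _ _) hAB
    obtain ⟨v, hv⟩ := exists_applyM_cons_false_eq_of_append_eq_left hD (w := w)
      (by rintro rfl; simp at hlen)
    rw [← hD] at he hq
    rw [hv] at hlen ⊢
    rw [List.append_assoc, List.prefix_append_right_inj]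
    refine ih q.length ?_ (T := fun c => if c then D else T false) hA (by simpa using he)
      (by simpa using hq) v ?_ rfl
    · simp [List.length_pos_iff.mpr hA]
    · simpa using hlen
  · obtain ⟨E, hE⟩ : T true <+: T false := List.prefix_of_prefix_length_le
      (List.prefix_append _ _) ((List.prefix_append _ q).trans hq) hBA.le
    obtain ⟨v, hv⟩ := exists_applyM_cons_false_eq_of_append_eq_right hE w
    rw [← hE] at he hq hBA hlen ⊢
    rw [hv] at hlen ⊢
    have hB : T true ≠ [] := by
      have := he.length_le
      simp only [List.length_append, List.length_singleton] at this
      exact List.ne_nil_of_length_pos (by omega)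
    rw [List.append_assoc (T true), List.append_assoc, List.prefix_append_right_inj]
    refine ih (E ++ q).length ?_ (T := fun c => if c then T true else E)
      (List.ne_nil_of_length_pos (by simpa using hBA)) (by simpa using he) (by simpa using hq) v ?_
      rfl
    · simp [← hE, List.length_pos_iff.mpr hB]
    · simpa using hlen

theorem prefix_applyM_cons {q : List Bool} {e c : Bool} {T : Bool → List Bool}
    (hc : T c ≠ []) (he : q ++ [e] <+: T c ++ T (!c)) (hq : q <+: T (!c) ++ T c)
    (w : List Bool) (hlen : q.length < (applyM T (c :: w)).length) :
    q ++ [e] <+: applyM T (c :: w) := by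
  cases c with
  | false => exact prefix_applyM_cons_false hc he hq w hlen
  | true =>
    have hswap : applyM (fun d => T (!d)) (false :: w.map (!·)) = applyM T (true :: w) := by
      simp [applyM, Function.comp_def]
    rw [← hswap] at hlen ⊢
    exact prefix_applyM_cons_false hc he hq _ hlen

def IsInfPrefix {α : Type*} (p : List α) (x : ℕ → α) : Prop :=
  ∀ i (h : i < p.length), p[i] = x i

lemma IsInfPrefix.of_prefix {α : Type*} {p p' : List α} {x : ℕ → α} (h : IsInfPrefix p' x)
    (hp : p <+: p') : IsInfPrefix p x := fun i hi =>
  (hp.getElem hi).trans (h i (lt_of_lt_of_le hi hp.length_le))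

lemma infLt_of_isInfPrefix {p : List Bool} {x y : ℕ → Bool} (hx : IsInfPrefix (p ++ [false]) x)
    (hy : IsInfPrefix (p ++ [true]) y) : InfLt x y := by
  refine ⟨p.length, fun i hi => ?_, ?_⟩
  · rw [← hx i (by simp; omega), ← hy i (by simp; omega)]
    simp [List.getElem_append_left hi]
  · rw [← hx _ (by simp), ← hy _ (by simp)]
    simp

lemma applyM_range_prefix (T : Bool → List Bool) (x : ℕ → Bool) {m m' : ℕ} (h : m ≤ m') :
    applyM T ((List.range m).map x) <+: applyM T ((List.range m').map x) := by
  obtain ⟨k, rfl⟩ := Nat.exists_eq_add_of_le h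
  simp [List.range_add]

lemma isInfPrefix_applyM_range {T : Bool → List Bool} (hT : ∀ c, T c ≠ []) (x : ℕ → Bool)
    (m : ℕ) : IsInfPrefix (applyM T ((List.range m).map x)) (applyInf T x) := by
  intro k hk
  have hk' : k < (applyM T ((List.range (k + 1)).map x)).length :=
    lt_of_lt_of_le (by simp) (length_le_length_applyM hT _)
  rw [applyInf, List.getD_eq_getElem _ _ hk']
  rcases le_total m (k + 1) with h | h
  · exact (applyM_range_prefix T x h).getElem hk
  · exact ((applyM_range_prefix T x h).getElem hk').symm

lemma isInfPrefix_applyInf {T : Bool → List Bool} (hT : ∀ c, T c ≠ []) {q : List Bool}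
    {c e : Bool} (he : q ++ [e] <+: T c ++ T (!c)) (hq : q <+: T (!c) ++ T c) {x : ℕ → Bool}
    {n : ℕ} (hx : x n = c) :
    IsInfPrefix (applyM T ((List.range n).map x) ++ q ++ [e]) (applyInf T x) := by
  set s := (List.range q.length).map (fun i => x (n + 1 + i))
  have hsplit : (List.range (n + 1 + q.length)).map x = (List.range n).map x ++ c :: s := by
    simp [List.range_add, List.range_succ, hx, s]
  refine (isInfPrefix_applyM_range hT x (n + 1 + q.length)).of_prefix ?_
  rw [hsplit, applyM_append, List.append_assoc, List.prefix_append_right_inj]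
  refine prefix_applyM_cons (hT c) he hq s ?_
  exact lt_of_lt_of_le (by simp [s]) (length_le_length_applyM hT _)

theorem exists_isInfPrefix_applyInf_of_infLt {T : Bool → List Bool} (hT : ∀ c, T c ≠ [])
    {q : List Bool} {a b : Bool} (ha : q ++ [a] <+: T false ++ T true)
    (hb : q ++ [b] <+: T true ++ T false) {u v : ℕ → Bool} (huv : InfLt u v) :
    ∃ M, IsInfPrefix (M ++ [a]) (applyInf T u) ∧ IsInfPrefix (M ++ [b]) (applyInf T v) := by
  obtain ⟨n, hagree, hlt⟩ := huv
  obtain ⟨hun, hvn⟩ := Bool.lt_iff.mp hlt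
  have hM : (List.range n).map u = (List.range n).map v :=
    List.map_congr_left fun i hi => hagree i (List.mem_range.mp hi)
  refine ⟨applyM T ((List.range n).map u) ++ q, ?_, ?_⟩
  · exact isInfPrefix_applyInf hT ha ((List.prefix_append _ _).trans hb) hun
  · rw [hM]
    exact isInfPrefix_applyInf hT hb ((List.prefix_append _ _).trans ha) hvn

lemma ne_nil_of_not_periodicM {T : Bool → List Bool} (hap : ¬ PeriodicM T) (c : Bool) :
    T c ≠ [] := by
  intro h
  cases c
  · exact hap ⟨T true, 0, 1, by simp [wpow, h], by simp [wpow]⟩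
  · exact hap ⟨T false, 1, 0, by simp [wpow], by simp [wpow, h]⟩

/-- An aperiodic binary morphism is order-preserving or
order-reversing on infinite words. -/
theorem stmt6 (T : Bool → List Bool) (hap : ¬ PeriodicM T) :
    (∀ u v : ℕ → Bool, InfLt u v → InfLt (applyInf T u) (applyInf T v)) ∨
    (∀ u v : ℕ → Bool, InfLt u v → InfLt (applyInf T v) (applyInf T u)) := by
  have hT := ne_nil_of_not_periodicM hap
  obtain ⟨q, a, b, hab, ha, hb⟩ := exists_prefix_append_singleton_of_ne
    (l₁ := T false ++ T true) (l₂ := T true ++ T false) (by simp [add_comm])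
    fun h => hap (exists_eq_wpow_of_append_comm h)
  cases a <;> cases b <;> simp only [ne_eq, not_true_eq_false] at hab
  · left
    intro u v huv
    obtain ⟨M, hu, hv⟩ := exists_isInfPrefix_applyInf_of_infLt hT ha hb huv
    exact infLt_of_isInfPrefix hu hv
  · right
    intro u v huv
    obtain ⟨M, hu, hv⟩ := exists_isInfPrefix_applyInf_of_infLt hT ha hb huv
    exact infLt_of_isInfPrefix hv hu
end

section
/- Let x be a primitive word, k, ℓ ≥ 1 integers, and y a non-empty proper prefix of x. If a binary morphism T satisfies T(0) = x^k and T(1) = x^ℓ y, then T is aperiodic (T(0) and T(1) are not powers of a common word). -/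
/-!
If `T` were periodic, `T 0` and `T 1` would commute, and cancelling `x ^ l` gives
`x ^ k y = y x ^ k`. Writing `x = y w`, this reads `y (w y) ^ k = y (y w) ^ k`, hence `w y = y w`.
Commuting non-empty words are powers of a common word, so `x = y w` would be a proper power.
-/

section Wpow

variable {α : Type*}

@[simp]
lemma wpow_zero (x : List α) : wpow x 0 = [] := rfl

lemma wpow_succ (x : List α) (n : ℕ) : wpow x (n + 1) = x ++ wpow x n := by
  simp [wpow, List.replicate_succ]

@[simp]
lemma wpow_one (x : List α) : wpow x 1 = x := by simp [wpow]

lemma wpow_add_s17 (x : List α) (m n : ℕ) : wpow x (m + n) = wpow x m ++ wpow x n := by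
  simp only [wpow, List.replicate_add, List.flatten_append]

lemma wpow_append_wpow_comm (x : List α) (m n : ℕ) :
    wpow x m ++ wpow x n = wpow x n ++ wpow x m := by
  rw [← wpow_add_s17, ← wpow_add_s17, Nat.add_comm]

lemma wpow_append_append (u v : List α) (n : ℕ) :
    wpow (u ++ v) n ++ u = u ++ wpow (v ++ u) n := by
  induction n with
  | zero => simp
  | succ n ih => simp only [wpow_succ, List.append_assoc, ih]

lemma eq_of_wpow_eq {u v : List α} {n : ℕ} (hn : n ≠ 0) (hlen : u.length = v.length)
    (h : wpow u n = wpow v n) : u = v := by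
  obtain ⟨n, rfl⟩ := Nat.exists_eq_succ_of_ne_zero hn
  rw [wpow_succ, wpow_succ] at h
  exact List.append_inj_left h hlen

theorem exists_wpow_of_append_comm {u v : List α} (h : u ++ v = v ++ u) :
    ∃ z a b, u = wpow z a ∧ v = wpow z b := by
  induction hn : u.length + v.length using Nat.strong_induction_on generalizing u v with
  | _ n ih =>
  wlog huv : u.length ≤ v.length generalizing u v
  · obtain ⟨z, a, b, hv, hu⟩ := this h.symm (by omega) (by omega)
    exact ⟨z, b, a, hu, hv⟩
  rcases eq_or_ne u [] with rfl | hu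
  · exact ⟨v, 0, 1, rfl, (wpow_one v).symm⟩
  obtain ⟨w, rfl⟩ : u <+: v :=
    List.prefix_of_prefix_length_le ⟨v, h⟩ (List.prefix_append v u) huv
  have hw : u ++ w = w ++ u := by simpa using h
  have hlen : u.length + w.length < n := by
    have := List.length_pos_iff.mpr hu
    simp only [List.length_append] at hn
    omega
  obtain ⟨z, a, b, rfl, rfl⟩ := ih _ hlen hw rfl
  exact ⟨z, a, a + b, rfl, (wpow_add_s17 z a b).symm⟩

lemma not_primitiveW_of_append_comm {u v : List α} (hu : u ≠ []) (hv : v ≠ [])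
    (h : u ++ v = v ++ u) : ¬ PrimitiveW (u ++ v) := by
  obtain ⟨z, a, b, rfl, rfl⟩ := exists_wpow_of_append_comm h
  have ha : a ≠ 0 := by rintro rfl; exact hu rfl
  have hb : b ≠ 0 := by rintro rfl; exact hv rfl
  exact fun hprim => hprim z (a + b) (by omega) (wpow_add_s17 z a b).symm

end Wpow

lemma PeriodicM.append_comm {T : Bool → List Bool} (hT : PeriodicM T) :
    T false ++ T true = T true ++ T false := by
  obtain ⟨t, i, j, h0, h1⟩ := hT
  rw [h0, h1, wpow_append_wpow_comm]

theorem stmt17_general (T : Bool → List Bool) (x y : List Bool) (k l : ℕ)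
    (hprim : PrimitiveW x) (hk : 1 ≤ k)
    (hy : y ≠ []) (hpre : y <+: x) (hyx : y ≠ x)
    (h0 : T false = wpow x k) (h1 : T true = wpow x l ++ y) :
    ¬ PeriodicM T := by
  intro hT
  obtain ⟨w, rfl⟩ := hpre
  have hw : w ≠ [] := by rintro rfl; exact hyx (List.append_nil y).symm
  have hxy : wpow (y ++ w) k ++ y = y ++ wpow (y ++ w) k := by
    have h := hT.append_comm
    rw [h0, h1, ← List.append_assoc, wpow_append_wpow_comm, List.append_assoc,
      List.append_assoc] at h
    exact List.append_cancel_left h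
  rw [wpow_append_append] at hxy
  have hwy : w ++ y = y ++ w :=
    eq_of_wpow_eq (by omega) (by simp [Nat.add_comm]) (List.append_cancel_left hxy)
  exact not_primitiveW_of_append_comm hy hw hwy.symm hprim

/-- If x is primitive, k, ℓ ≥ 1, y a non-empty proper prefix of x,
T(0) = x^k and T(1) = x^ℓ y, then T is aperiodic. -/
theorem stmt17 (T : Bool → List Bool) (x y : List Bool) (k l : ℕ)
    (hprim : PrimitiveW x) (hk : 1 ≤ k) (hl : 1 ≤ l)
    (hy : y ≠ []) (hpre : y <+: x) (hyx : y ≠ x)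
    (h0 : T false = wpow x k) (h1 : T true = wpow x l ++ y) :
    ¬ PeriodicM T :=
  stmt17_general T x y k l hprim hk hy hpre hyx h0 h1
end
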